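/- Let n ≥ 1, let 1 ≤ m < n, and let w, u be permutations of {1,2,…,n} with w ≤_m u in the m-Bruhat order. Then w(a) ≤ u(a) for every a with 1 ≤ a ≤ m, and w(b) ≥ u(b) for every b with m < b ≤ n. -/

import Mathlib

/-- The length (number of inversions) of a permutation of `Fin n`
(representing `{1,…,n}` with `i : Fin n` standing for `i+1`). -/
def invLength {n : ℕ} (w : Equiv.Perm (Fin n)) : ℕ :=
  (Finset.univ.filter fun p : Fin n × Fin n => p.1 < p.2 ∧ w p.2 < w p.1).card

/-- `w τ_{a₁b₁} ⋯ τ_{aₛbₛ}` for the list of pairs `L = [(a₁,b₁),…,(aₛ,bₛ)]`. -/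
def chainProd {n : ℕ} (w : Equiv.Perm (Fin n)) (L : List (Fin n × Fin n)) :
    Equiv.Perm (Fin n) :=
  w * (L.map fun p => Equiv.swap p.1 p.2).prod

/-- The list `L = [(a₁,b₁),…,(aₛ,bₛ)]` is a chain witnessing `w ≤ₘ u`:
each `aᵢ ≤ m < bᵢ` (in 1-indexed terms, i.e. `(aᵢ : ℕ) < m ≤ (bᵢ : ℕ)` in 0-indexed `Fin n`),
`u = w τ_{a₁b₁} ⋯ τ_{aₛbₛ}`, and `ℓ(w τ_{a₁b₁} ⋯ τ_{aᵢbᵢ}) = ℓ(w) + i` for all `i ≤ s`. -/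
def IsMChain {n : ℕ} (m : ℕ) (w u : Equiv.Perm (Fin n)) (L : List (Fin n × Fin n)) : Prop :=
  (∀ p ∈ L, (p.1 : ℕ) < m ∧ m ≤ (p.2 : ℕ)) ∧
  u = chainProd w L ∧
  ∀ i, i ≤ L.length → invLength (chainProd w (L.take i)) = invLength w + i

/-- The `m`-Bruhat order `w ≤ₘ u`. -/
def mBruhat {n : ℕ} (m : ℕ) (w u : Equiv.Perm (Fin n)) : Prop :=
  ∃ L, IsMChain m w u L

/-!
A step `w ↦ w * swap a b` with `a < b` raises the length only if `w a < w b`: otherwise the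
inversions of `w * swap a b` inject into those of `w` minus `(a, b)`. Such a step, with
`a < m ≤ b`, increases the value at `a`, decreases the value at `b`, and fixes all other values,
so along an `m`-chain values at positions `< m` only grow and values at positions `≥ m` only shrink.
-/

open Equiv

variable {α : Type*} [LinearOrder α] {n : ℕ}

def inversions (w : Perm (Fin n)) : Finset (Fin n × Fin n) :=
  Finset.univ.filter fun p => p.1 < p.2 ∧ w p.2 < w p.1

lemma mem_inversions {w : Perm (Fin n)} {p : Fin n × Fin n} :
    p ∈ inversions w ↔ p.1 < p.2 ∧ w p.2 < w p.1 := by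
  simp [inversions]

lemma swap_apply_lt_swap_apply {w : Perm α} {a b i j : α} (hab : a < b)
    (hw : w b < w a) (hij : i < j) (hwij : w i < w j)
    (hσ : w (swap a b j) < w (swap a b i)) : swap a b i < swap a b j := by
  have := w.injective.ne hab.ne
  simp only [swap_apply_def] at hσ ⊢
  split_ifs at hσ ⊢ <;> subst_vars <;> order

/- An inversion of `w * swap a b` that is not one of `w` is moved by `swap a b` to an inversion
of `w`, so `f` injects the inversions of `w * swap a b` into those of `w` other than `(a, b)`. -/
theorem invLength_mul_swap_lt {w : Perm (Fin n)} {a b : Fin n} (hab : a < b)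
    (hw : w b < w a) : invLength (w * swap a b) < invLength w := by
  set σ := swap a b
  let f : Fin n × Fin n → Fin n × Fin n := fun p => if w p.2 < w p.1 then p else (σ p.1, σ p.2)
  have hmaps : ∀ p ∈ inversions (w * σ), f p ∈ (inversions w).erase (a, b) := by
    rintro ⟨i, j⟩ hp
    obtain ⟨hij, hσ⟩ := mem_inversions.1 hp
    simp only [Perm.mul_apply] at hσ
    simp only [f, Finset.mem_erase, mem_inversions, ne_eq]
    split_ifs with hwij
    · refine ⟨?_, hij, hwij⟩
      intro h
      obtain ⟨hi, hj⟩ := Prod.mk.inj h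
      simp only [hi, hj, σ, swap_apply_left, swap_apply_right] at hσ hwij
      exact lt_asymm hσ hwij
    · refine ⟨?_, swap_apply_lt_swap_apply hab hw hij (not_lt.1 hwij |>.lt_of_ne ?_) hσ, hσ⟩
      · intro h
        obtain ⟨hi, hj⟩ := Prod.mk.inj h
        rw [swap_apply_eq_iff, swap_apply_left] at hi
        rw [swap_apply_eq_iff, swap_apply_right] at hj
        subst hi hj
        exact lt_asymm hab hij
      · exact w.injective.ne hij.ne
  have hinj : Set.InjOn f (inversions (w * σ)) := by
    rintro ⟨i, j⟩ hp ⟨k, l⟩ hq hpq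
    have hσp := (mem_inversions.1 hp).2
    have hσq := (mem_inversions.1 hq).2
    simp only [Perm.mul_apply] at hσp hσq
    simp only [f] at hpq
    split_ifs at hpq with h₁ h₂ h₂ <;> simp only [Prod.mk.injEq] at hpq <;>
      obtain ⟨hik, hjl⟩ := hpq
    · rw [hik, hjl]
    · simp only [hik, hjl, σ, swap_apply_self] at hσp
      exact absurd hσp h₂
    · simp only [← hik, ← hjl, σ, swap_apply_self] at hσq
      exact absurd hσq h₁
    · rw [σ.injective hik, σ.injective hjl]
  calc invLength (w * σ) ≤ ((inversions w).erase (a, b)).card :=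
        Finset.card_le_card_of_injOn f hmaps hinj
    _ < invLength w := Finset.card_erase_lt_of_mem (mem_inversions.2 ⟨hab, hw⟩)

lemma lt_of_invLength_lt_invLength_mul_swap {w : Perm (Fin n)} {a b : Fin n} (hab : a < b)
    (h : invLength w < invLength (w * swap a b)) : w a < w b :=
  (lt_or_gt_of_ne (w.injective.ne hab.ne)).resolve_right
    fun hw => (invLength_mul_swap_lt hab hw).not_gt h

lemma apply_le_mul_swap_apply {w : Perm α} {a b x : α} (hwab : w a ≤ w b)
    (hx : x ≠ b) : w x ≤ (w * swap a b) x := by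
  by_cases hxa : x = a
  · simpa [hxa] using hwab
  · simp [swap_apply_of_ne_of_ne hxa hx]

lemma mul_swap_apply_le_apply {w : Perm α} {a b x : α} (hwab : w a ≤ w b)
    (hx : x ≠ a) : (w * swap a b) x ≤ w x := by
  by_cases hxb : x = b
  · simpa [hxb] using hwab
  · simp [swap_apply_of_ne_of_ne hx hxb]

lemma chainProd_cons (w : Perm (Fin n)) (p : Fin n × Fin n) (L : List (Fin n × Fin n)) :
    chainProd w (p :: L) = chainProd (w * swap p.1 p.2) L := by
  simp [chainProd, mul_assoc]

namespace IsMChain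

variable {m : ℕ} {w u : Perm (Fin n)} {p : Fin n × Fin n} {L : List (Fin n × Fin n)}

lemma invLength_mul_swap_of_cons (h : IsMChain m w u (p :: L)) :
    invLength (w * swap p.1 p.2) = invLength w + 1 := by
  simpa [chainProd] using h.2.2 1 (by simp)

lemma of_cons (h : IsMChain m w u (p :: L)) : IsMChain m (w * swap p.1 p.2) u L := by
  obtain ⟨hpairs, rfl, hlen⟩ := h
  refine ⟨fun q hq => hpairs q (List.mem_cons_of_mem p hq), chainProd_cons w p L, fun i hi => ?_⟩
  have := hlen (i + 1) (by simpa using hi)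
  rw [List.take_succ_cons, chainProd_cons] at this
  rw [this, invLength_mul_swap_of_cons ⟨hpairs, rfl, hlen⟩]
  omega

lemma apply_le_and_le_apply (h : IsMChain m w u L) :
    (∀ x : Fin n, (x : ℕ) < m → w x ≤ u x) ∧ (∀ x : Fin n, m ≤ (x : ℕ) → u x ≤ w x) := by
  induction L generalizing w with
  | nil =>
    obtain ⟨-, rfl, -⟩ := h
    simp [chainProd]
  | cons p L ih =>
    obtain ⟨ha, hb⟩ := h.1 p List.mem_cons_self
    have hab : p.1 < p.2 := Fin.lt_def.2 (ha.trans_le hb)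
    have hwab : w p.1 ≤ w p.2 := (lt_of_invLength_lt_invLength_mul_swap hab
      (by rw [h.invLength_mul_swap_of_cons]; omega)).le
    obtain ⟨ih₁, ih₂⟩ := ih h.of_cons
    refine ⟨fun x hx => (apply_le_mul_swap_apply hwab ?_).trans (ih₁ x hx),
      fun x hx => (ih₂ x hx).trans (mul_swap_apply_le_apply hwab ?_)⟩
    · rintro rfl; omega
    · rintro rfl; omega

end IsMChain

theorem stmt0_general (n m : ℕ)
    (w u : Equiv.Perm (Fin n)) (h : mBruhat m w u) :
    (∀ a : Fin n, (a : ℕ) < m → w a ≤ u a) ∧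
    (∀ b : Fin n, m ≤ (b : ℕ) → u b ≤ w b) :=
  let ⟨_, hL⟩ := h
  hL.apply_le_and_le_apply

/-- if `w ≤ₘ u` then `w(a) ≤ u(a)` for `a ≤ m` and `w(b) ≥ u(b)` for `m < b`. -/
theorem stmt0 (n m : ℕ) (hn : 1 ≤ n) (hm : 1 ≤ m) (hmn : m < n)
    (w u : Equiv.Perm (Fin n)) (h : mBruhat m w u) :
    (∀ a : Fin n, (a : ℕ) < m → w a ≤ u a) ∧
    (∀ b : Fin n, m ≤ (b : ℕ) → u b ≤ w b) :=
  stmt0_general n m w u h
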